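/- Every Pauli word is an eigenvector of a Pauli-Lindblad generator: let λ : V → ℝ and let L be the linear map on 2^n×2^n complex matrices L(ρ) = Σ_{a ∈ V} λ_a·(P_a ρ P_a − ρ). Then for every b ∈ V, L(P_b) = −2·(Σ_{k ∈ V} λ_k·⟨b,k⟩_ℤ)·P_b. -/
import Mathlib


/-- Index set of `n`-qubit Pauli words. -/
abbrev V (n : ℕ) : Type := (Fin n → ZMod 2) × (Fin n → ZMod 2)

/-- Symplectic inner product `⟨a,b⟩ = Σᵢ (aₓᵢ·b_zᵢ + a_zᵢ·bₓᵢ) ∈ ZMod 2`. -/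
def sform {n : ℕ} (a b : V n) : ZMod 2 := ∑ i, (a.1 i * b.2 i + a.2 i * b.1 i)

/-- The sign `χ(a,b) = (−1)^⟨a,b⟩ ∈ ℝ`. -/
noncomputable def chi {n : ℕ} (a b : V n) : ℝ := (-1 : ℝ) ^ (sform a b).val

/-- Integer (real-valued) lift `⟨a,b⟩_ℤ ∈ {0,1} ⊂ ℝ`. -/
noncomputable def sformZ {n : ℕ} (a b : V n) : ℝ := ((sform a b).val : ℝ)

/-- The single-qubit Pauli factor `i^(aₓ·a_z) · X^(aₓ) · Z^(a_z)`. -/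
noncomputable def pauli1 (ax az : ZMod 2) : Matrix (Fin 2) (Fin 2) ℂ :=
  (Complex.I ^ (ax.val * az.val)) •
    ((!![0, 1; 1, 0] : Matrix (Fin 2) (Fin 2) ℂ) ^ ax.val *
     (!![1, 0; 0, -1] : Matrix (Fin 2) (Fin 2) ℂ) ^ az.val)

/-- The space of `2^n × 2^n` complex matrices (indexed by `Fin n → Fin 2`). -/
abbrev Mq (n : ℕ) : Type := Matrix (Fin n → Fin 2) (Fin n → Fin 2) ℂ

/-- The `n`-qubit Pauli word `P_a`, the Kronecker product over `i ∈ Fin n`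
of `i^(aₓᵢ·a_zᵢ)·X^(aₓᵢ)·Z^(a_zᵢ)`. -/
noncomputable def P {n : ℕ} (a : V n) : Mq n :=
  Matrix.of fun x y => ∏ i, pauli1 (a.1 i) (a.2 i) (x i) (y i)

lemma zmod2_cases : ∀ x : ZMod 2, x = 0 ∨ x = 1 := by decide

lemma v1 : (1 : ZMod 2).val = 1 := rfl

lemma p00 : pauli1 0 0 = 1 := by simp [pauli1]
lemma p10 : pauli1 1 0 = !![0, 1; 1, 0] := by simp [pauli1, v1]
lemma p01 : pauli1 0 1 = !![1, 0; 0, -1] := by simp [pauli1, v1]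
lemma p11 : pauli1 1 1 = !![0, -Complex.I; Complex.I, 0] := by
  simp only [pauli1, v1, Nat.mul_one, pow_one, Matrix.mul_fin_two]
  ext i j; fin_cases i <;> fin_cases j <;> simp

lemma pauli1_conj (a c bb d : ZMod 2) :
    pauli1 a c * pauli1 bb d * pauli1 a c =
      ((-1 : ℂ) ^ (a * d + c * bb : ZMod 2).val) • pauli1 bb d := by
  rcases zmod2_cases a with ha | ha <;> rcases zmod2_cases c with hc | hc <;>
    rcases zmod2_cases bb with hb | hb <;> rcases zmod2_cases d with hd | hd <;>
    subst ha hc hb hd <;>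
    norm_num [p00, p10, p01, p11, Matrix.mul_fin_two, v1,
      show ((2:ZMod 2)).val = 0 from rfl] <;>
    ext i j <;> fin_cases i <;> fin_cases j <;> simp [Complex.I_sq]

lemma kron_mul {n : ℕ} (A B : Fin n → Matrix (Fin 2) (Fin 2) ℂ) :
    (Matrix.of fun x y => ∏ i, A i (x i) (y i)) *
      (Matrix.of fun x y => ∏ i, B i (x i) (y i)) =
    (Matrix.of fun x y : Fin n → Fin 2 => ∏ i, (A i * B i) (x i) (y i)) := by
  ext x y
  simp only [Matrix.mul_apply, Matrix.of_apply]
  rw [Fintype.prod_sum fun i t => A i (x i) t * B i t (y i)]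
  exact Finset.sum_congr rfl fun z _ => Finset.prod_mul_distrib.symm

lemma neg_one_pow_add (x y : ZMod 2) :
    (-1 : ℂ) ^ (x + y).val = (-1) ^ x.val * (-1) ^ y.val := by
  rcases zmod2_cases x with h | h <;> rcases zmod2_cases y with h' | h' <;>
    subst h h' <;> norm_num [v1, show ((2:ZMod 2)).val = 0 from rfl]

lemma neg_one_pow_sum {ι : Type*} (s : Finset ι) (f : ι → ZMod 2) :
    (-1 : ℂ) ^ (∑ i ∈ s, f i).val = ∏ i ∈ s, (-1 : ℂ) ^ (f i).val := by
  induction s using Finset.cons_induction with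
  | empty => simp
  | cons i s hi ih => rw [Finset.sum_cons, Finset.prod_cons, neg_one_pow_add, ih]

lemma P_conj {n : ℕ} (a b : V n) :
    P a * P b * P a = ((-1 : ℂ) ^ (sform a b).val) • P b := by
  rw [P, P, kron_mul, kron_mul]
  ext x y
  simp only [Matrix.of_apply, Matrix.smul_apply, smul_eq_mul]
  calc ∏ i, (pauli1 (a.1 i) (a.2 i) * pauli1 (b.1 i) (b.2 i) * pauli1 (a.1 i) (a.2 i)) (x i) (y i)
      = ∏ i, ((-1 : ℂ) ^ (a.1 i * b.2 i + a.2 i * b.1 i).val * pauli1 (b.1 i) (b.2 i) (x i) (y i)) := by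
        refine Finset.prod_congr rfl fun i _ => ?_
        rw [pauli1_conj]; simp
    _ = _ := by
        rw [Finset.prod_mul_distrib, sform, neg_one_pow_sum]

lemma sform_comm {n : ℕ} (a b : V n) : sform a b = sform b a := by
  unfold sform; exact Finset.sum_congr rfl fun i _ => by ring

lemma coeff_eq (x : ZMod 2) : (-1 : ℂ) ^ x.val - 1 = -2 * (x.val : ℂ) := by
  rcases zmod2_cases x with h | h <;> subst h <;> norm_num [v1]

theorem pauli_word_eigenvector_of_PL_generator (n : ℕ) (hn : 1 ≤ n) (lam : V n → ℝ)
    (L : Mq n → Mq n)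
    (hL : ∀ ρ : Mq n, L ρ = ∑ a : V n, (lam a : ℂ) • (P a * ρ * P a - ρ)) (b : V n) :
    L (P b) = ((-2 * ∑ k : V n, lam k * sformZ b k : ℝ) : ℂ) • P b := by
  rw [hL]
  have h1 : ∀ a : V n, (lam a : ℂ) • (P a * P b * P a - P b)
      = ((lam a : ℂ) * ((-1 : ℂ) ^ (sform a b).val - 1)) • P b := by
    intro a
    rw [P_conj, mul_smul, sub_smul, one_smul]
  rw [Finset.sum_congr rfl fun a _ => h1 a, ← Finset.sum_smul]
  congr 1
  rw [Finset.sum_congr rfl (fun a _ => by rw [coeff_eq, sform_comm])]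
  push_cast [sformZ]
  rw [Finset.mul_sum]
  exact Finset.sum_congr rfl fun a _ => by ring
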